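/- arXiv:2105.04808 — 3 statements merged into one kernel-verified Lean document; each statement's English description precedes it below -/
import Mathlib

section
/- Let Δ > 0, σ > 0 and ε ≥ 0. For every measurable set S ⊆ ℝ, N(Δ, σ²)(S) − e^ε · N(0, σ²)(S) ≤ Φ(Δ/(2σ) − εσ/Δ) − e^ε·Φ(−Δ/(2σ) − εσ/Δ). -/
/-! Since the log-likelihood ratio of `N(Δ, σ²)` against `N(0, σ²)` is affine in `x`, the
privacy loss density `f_Δ - e^ε f_0` is positive exactly on `(c, ∞)` with `c = εσ²/Δ + Δ/2`.
Hence its integral over any `S` is at most its integral over `(c, ∞)`, and both Gaussian tails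
there are values of `Φ`. -/

open MeasureTheory ProbabilityTheory Real

/-- The cumulative distribution function of the standard normal distribution. -/
noncomputable def stdNormalCDF (x : ℝ) : ℝ :=
  ∫ t in Set.Iic x, (1 / Real.sqrt (2 * Real.pi)) * Real.exp (-(t ^ 2) / 2)

open scoped NNReal

theorem setIntegral_le_setIntegral_of_nonneg_on_of_nonpos_off {α : Type*} [MeasurableSpace α]
    {μ : Measure α} {f : α → ℝ} {s t : Set α} (hf : Integrable f μ) (ht : MeasurableSet t)
    (h_nonneg : ∀ x ∈ t, 0 ≤ f x) (h_nonpos : ∀ x ∉ t, f x ≤ 0) :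
    ∫ x in s, f x ∂μ ≤ ∫ x in t, f x ∂μ := by
  have h_diff : ∫ x in s \ t, f x ∂μ ≤ 0 := by
    refine setIntegral_nonpos_of_ae_restrict
      (ae_mono (Measure.restrict_mono (Set.sdiff_subset_compl s t) le_rfl) ?_)
    exact ae_restrict_of_forall_mem ht.compl h_nonpos
  have h_inter : ∫ x in s ∩ t, f x ∂μ ≤ ∫ x in t, f x ∂μ :=
    setIntegral_mono_set hf.integrableOn (ae_restrict_of_forall_mem ht h_nonneg)
      Set.inter_subset_right.eventuallyLE
  linarith [integral_inter_add_sdiff ht (hf.integrableOn (s := s))]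

theorem gaussianReal_toReal_eq_integral (m : ℝ) {v : ℝ≥0} (hv : v ≠ 0) (s : Set ℝ) :
    (gaussianReal m v s).toReal = ∫ x in s, gaussianPDFReal m v x := by
  rw [gaussianReal_apply_eq_integral m hv,
    ENNReal.toReal_ofReal (integral_nonneg fun x => gaussianPDFReal_nonneg m v x)]

theorem exp_mul_gaussianPDFReal_lt_iff {m₀ m₁ : ℝ} (hm : m₀ < m₁) {v : ℝ≥0}
    (hv : v ≠ 0) (t x : ℝ) :
    exp t * gaussianPDFReal m₀ v x < gaussianPDFReal m₁ v x ↔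
      v * t / (m₁ - m₀) + (m₀ + m₁) / 2 < x := by
  have hv₀ : (0 : ℝ) < v := NNReal.coe_pos.mpr (pos_iff_ne_zero.mpr hv)
  have h_log : -(x - m₁) ^ 2 / (2 * v) - -(x - m₀) ^ 2 / (2 * v)
      = (m₁ - m₀) * (x - (m₀ + m₁) / 2) / v := by
    field_simp
    ring
  have h_norm : 0 < (√(2 * π * v))⁻¹ := by positivity
  rw [gaussianPDFReal, gaussianPDFReal, mul_left_comm, ← exp_add, mul_lt_mul_iff_right₀ h_norm,
    exp_lt_exp, ← lt_sub_iff_add_lt, h_log, lt_div_iff₀ hv₀, ← lt_sub_iff_add_lt,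
    div_lt_iff₀ (sub_pos.mpr hm)]
  constructor <;> intro h <;> linarith

theorem stdNormalCDF_eq_setIntegral_Ioi (x : ℝ) :
    stdNormalCDF x = ∫ t in Set.Ioi (-x), gaussianPDFReal 0 1 t := by
  rw [stdNormalCDF, ← neg_neg x, ← integral_comp_neg_Ioi, neg_neg]
  simp [gaussianPDFReal, one_div]

theorem gaussianReal_Ioi_toReal (m : ℝ) {s : ℝ} (hs : 0 < s) (c : ℝ) :
    (gaussianReal m ⟨s ^ 2, sq_nonneg s⟩ (Set.Ioi c)).toReal = stdNormalCDF ((m - c) / s) := by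
  have h_std :
      (gaussianReal 0 1).map (fun x => s * x + m) = gaussianReal m ⟨s ^ 2, sq_nonneg s⟩ := by
    rw [show (fun x => s * x + m) = (· + m) ∘ (s * ·) from rfl,
      ← Measure.map_map (measurable_add_const m) (measurable_const_mul s),
      gaussianReal_map_const_mul, gaussianReal_map_add_const]
    norm_num
    rfl
  have h_preimage : (fun x => s * x + m) ⁻¹' Set.Ioi c = Set.Ioi (-((m - c) / s)) := by
    ext x
    simp only [Set.mem_preimage, Set.mem_Ioi, neg_div', neg_sub, div_lt_iff₀ hs]
    constructor <;> intro h <;> linarith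
  rw [← h_std, Measure.map_apply (by fun_prop) measurableSet_Ioi, h_preimage,
    gaussianReal_toReal_eq_integral 0 one_ne_zero, stdNormalCDF_eq_setIntegral_Ioi]

theorem gaussian_privacy_loss_le_general
    (Δ σ ε : ℝ) (hΔ : 0 < Δ) (hσ : 0 < σ) :
    ∀ S : Set ℝ, MeasurableSet S →
      (gaussianReal Δ ⟨σ ^ 2, sq_nonneg σ⟩ S).toReal
          - Real.exp ε * (gaussianReal 0 ⟨σ ^ 2, sq_nonneg σ⟩ S).toReal
        ≤ stdNormalCDF (Δ / (2 * σ) - ε * σ / Δ)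
            - Real.exp ε * stdNormalCDF (-(Δ / (2 * σ)) - ε * σ / Δ) := by
  intro S _
  set v : ℝ≥0 := ⟨σ ^ 2, sq_nonneg σ⟩
  have hv : v ≠ 0 := fun h => pow_ne_zero 2 hσ.ne' (congrArg NNReal.toReal h)
  set loss := fun x => gaussianPDFReal Δ v x - exp ε * gaussianPDFReal 0 v x
  have h_loss : ∀ T, (gaussianReal Δ v T).toReal - exp ε * (gaussianReal 0 v T).toReal
      = ∫ x in T, loss x := fun T => by
    rw [gaussianReal_toReal_eq_integral Δ hv, gaussianReal_toReal_eq_integral 0 hv,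
      ← integral_const_mul, ← integral_sub (integrable_gaussianPDFReal Δ v).integrableOn
        ((integrable_gaussianPDFReal 0 v).const_mul _).integrableOn]
  set c := σ ^ 2 * ε / Δ + Δ / 2
  have h_loss_pos : ∀ x, 0 < loss x ↔ c < x := fun x => by
    have h_lt := exp_mul_gaussianPDFReal_lt_iff hΔ hv ε x
    rw [sub_zero, zero_add] at h_lt
    exact sub_pos.trans h_lt
  calc _ = ∫ x in S, loss x := h_loss S
    _ ≤ ∫ x in Set.Ioi c, loss x :=
      setIntegral_le_setIntegral_of_nonneg_on_of_nonpos_off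
        ((integrable_gaussianPDFReal Δ v).sub ((integrable_gaussianPDFReal 0 v).const_mul _))
        measurableSet_Ioi (fun x hx => ((h_loss_pos x).mpr hx).le)
        (fun x hx => not_lt.mp (mt (h_loss_pos x).mp hx))
    _ = _ := by
      rw [← h_loss, gaussianReal_Ioi_toReal Δ hσ, gaussianReal_Ioi_toReal 0 hσ]
      congr 3 <;> simp only [c] <;> field_simp <;> ring

/-- For every measurable set `S`, the privacy-loss quantity of the Gaussian mechanism is at
most the analytic-Gaussian expression. -/
theorem gaussian_privacy_loss_le
    (Δ σ ε : ℝ) (hΔ : 0 < Δ) (hσ : 0 < σ) (hε : 0 ≤ ε) :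
    ∀ S : Set ℝ, MeasurableSet S →
      (gaussianReal Δ ⟨σ ^ 2, sq_nonneg σ⟩ S).toReal
          - Real.exp ε * (gaussianReal 0 ⟨σ ^ 2, sq_nonneg σ⟩ S).toReal
        ≤ stdNormalCDF (Δ / (2 * σ) - ε * σ / Δ)
            - Real.exp ε * stdNormalCDF (-(Δ / (2 * σ)) - ε * σ / Δ) :=
  gaussian_privacy_loss_le_general Δ σ ε hΔ hσ
end

section
/- Fix σ > 0 and ε ≥ 0. The function t ↦ Φ(t/(2σ) − εσ/t) − e^ε·Φ(−t/(2σ) − εσ/t) is monotone nondecreasing on (0, ∞). -/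
/-!
Write `u = t/(2σ)` and `v = εσ/t`, so that `2uv = ε` does not depend on `t`. Since
`(-u - v)² = (u - v)² + 4uv`, the Gaussian density satisfies `e^ε φ(-u - v) = φ(u - v)`,
and the two terms of the derivative combine to
`φ(u - v) · (u' - v') + φ(u - v) · (u' + v') = 2u' φ(u - v) = φ(u - v)/σ ≥ 0`.
-/

open MeasureTheory ProbabilityTheory Real

noncomputable def stdNormalPDF (x : ℝ) : ℝ :=
  (1 / Real.sqrt (2 * Real.pi)) * Real.exp (-(x ^ 2) / 2)

lemma stdNormalPDF_nonneg (x : ℝ) : 0 ≤ stdNormalPDF x := by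
  unfold stdNormalPDF; positivity

lemma continuous_stdNormalPDF : Continuous stdNormalPDF := by
  unfold stdNormalPDF; fun_prop

lemma integrable_stdNormalPDF : Integrable stdNormalPDF := by
  convert (integrable_exp_neg_mul_sq (b := 1 / 2) (by norm_num)).const_mul
    (1 / Real.sqrt (2 * Real.pi)) using 2 with x
  unfold stdNormalPDF
  ring_nf

lemma exp_mul_stdNormalPDF_neg_sub (u v : ℝ) :
    Real.exp (2 * u * v) * stdNormalPDF (-u - v) = stdNormalPDF (u - v) := by
  unfold stdNormalPDF
  rw [mul_left_comm, ← Real.exp_add]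
  ring_nf

lemma hasDerivAt_integral_Iic {f : ℝ → ℝ} (hf : Continuous f) (hfi : Integrable f) (x : ℝ) :
    HasDerivAt (fun y => ∫ t in Set.Iic y, f t) (f x) x := by
  have hsplit : (fun y => ∫ t in Set.Iic y, f t)
      = fun y => (∫ t in Set.Iic 0, f t) + ∫ t in (0 : ℝ)..y, f t := by
    ext y
    rw [← intervalIntegral.integral_Iic_sub_Iic hfi.integrableOn hfi.integrableOn]
    ring
  rw [hsplit]
  exact (intervalIntegral.integral_hasDerivAt_right (hf.intervalIntegrable _ _)
    (hf.stronglyMeasurableAtFilter _ _) hf.continuousAt).const_add _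

lemma hasDerivAt_stdNormalCDF (x : ℝ) : HasDerivAt stdNormalCDF (stdNormalPDF x) x :=
  hasDerivAt_integral_Iic continuous_stdNormalPDF integrable_stdNormalPDF x

lemma HasDerivAt.stdNormalCDF_sub_sub_exp_mul {u v : ℝ → ℝ} {u' v' t : ℝ}
    (hu : HasDerivAt u u' t) (hv : HasDerivAt v v' t) :
    HasDerivAt (fun s => stdNormalCDF (u s - v s)
        - Real.exp (2 * u t * v t) * stdNormalCDF (-u s - v s))
      (2 * u' * stdNormalPDF (u t - v t)) t := by
  have hplus := (hasDerivAt_stdNormalCDF _).comp t (hu.sub hv)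
  have hminus := ((hasDerivAt_stdNormalCDF _).comp t (hu.neg.sub hv)).const_mul
    (Real.exp (2 * u t * v t))
  refine (hplus.sub hminus).congr_deriv ?_
  simp only [Pi.sub_apply, Pi.neg_apply]
  rw [← mul_assoc, exp_mul_stdNormalPDF_neg_sub]
  ring

theorem analytic_gaussian_expression_monotone_general
    (σ ε : ℝ) (hσ : 0 < σ) :
    MonotoneOn
      (fun t => stdNormalCDF (t / (2 * σ) - ε * σ / t)
        - Real.exp ε * stdNormalCDF (-(t / (2 * σ)) - ε * σ / t))
      (Set.Ioi (0 : ℝ)) := by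
  have hderiv : ∀ t ∈ Set.Ioi (0 : ℝ), HasDerivAt
      (fun t => stdNormalCDF (t / (2 * σ) - ε * σ / t)
        - Real.exp ε * stdNormalCDF (-(t / (2 * σ)) - ε * σ / t))
      (2 * (1 / (2 * σ)) * stdNormalPDF (t / (2 * σ) - ε * σ / t)) t := by
    intro t (ht : 0 < t)
    have hexp : 2 * (t / (2 * σ)) * (ε * σ / t) = ε := by field_simp
    have hu : HasDerivAt (fun s => s / (2 * σ)) (1 / (2 * σ)) t := (hasDerivAt_id' t).div_const _
    have hv : HasDerivAt (fun s => ε * σ / s) (ε * σ * -(t ^ 2)⁻¹) t := by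
      simpa only [div_eq_mul_inv] using (hasDerivAt_inv ht.ne').const_mul (ε * σ)
    have h := HasDerivAt.stdNormalCDF_sub_sub_exp_mul hu hv
    beta_reduce at h
    rwa [hexp] at h
  refine monotoneOn_of_hasDerivWithinAt_nonneg (convex_Ioi 0)
    (f' := fun t => 2 * (1 / (2 * σ)) * stdNormalPDF (t / (2 * σ) - ε * σ / t))
    (fun t ht => (hderiv t ht).continuousAt.continuousWithinAt) ?_ ?_ <;> rw [interior_Ioi]
  · exact fun t ht => (hderiv t ht).hasDerivWithinAt
  · exact fun t _ => mul_nonneg (by positivity) (stdNormalPDF_nonneg _)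

/-- For fixed `σ > 0` and `ε ≥ 0`, the worst-case privacy-loss expression
`t ↦ Φ(t/(2σ) − εσ/t) − e^ε·Φ(−t/(2σ) − εσ/t)` is monotone nondecreasing on `(0, ∞)`. -/
theorem analytic_gaussian_expression_monotone
    (σ ε : ℝ) (hσ : 0 < σ) (hε : 0 ≤ ε) :
    MonotoneOn
      (fun t => stdNormalCDF (t / (2 * σ) - ε * σ / t)
        - Real.exp ε * stdNormalCDF (-(t / (2 * σ)) - ε * σ / t))
      (Set.Ioi (0 : ℝ)) :=
  analytic_gaussian_expression_monotone_general σ ε hσ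
end

section
/- Let Δ > 0, σ > 0, ε ≥ 0 and δ ∈ (0,1) satisfy the analytic-Gaussian condition Φ(Δ/(2σ) − εσ/Δ) − e^ε·Φ(−Δ/(2σ) − εσ/Δ) ≤ δ. Then for all a, b ∈ ℝ with |a − b| ≤ Δ, the probability that dpsign outputs −1 satisfies 1 − Φ(a/σ) ≤ e^ε · (1 − Φ(b/σ)) + δ. -/
open Real

open MeasureTheory ProbabilityTheory Set

/-!
Write `Φ` for `stdNormalCDF`, `φ` for the standard Gaussian density and `c = Δ / σ`. Since
`1 - Φ y = Φ (-y)`, the claim reads `Φ (-a/σ) ≤ e^ε Φ (-b/σ) + δ`, and `Φ` is monotone, so it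
suffices that `Φ x - e^ε Φ (x - c) ≤ δ` for every `x`. The derivative `φ x - e^ε φ (x - c)` of the
left-hand side equals `(1 - exp (c (x - x₀))) φ x` with `x₀ = c/2 - ε/c`, so it changes sign from
`+` to `-` at `x₀`, where the left-hand side therefore attains its maximum; that maximum is the
left-hand side of the analytic-Gaussian condition.
-/

lemma stdNormalCDF_eq_setIntegral (x : ℝ) :
    stdNormalCDF x = ∫ t in Iic x, gaussianPDFReal 0 1 t := by
  simp [stdNormalCDF, gaussianPDFReal, div_eq_inv_mul]

lemma stdNormalCDF_sub_stdNormalCDF (x y : ℝ) :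
    stdNormalCDF y - stdNormalCDF x = ∫ t in x..y, gaussianPDFReal 0 1 t := by
  simp only [stdNormalCDF_eq_setIntegral]
  exact intervalIntegral.integral_Iic_sub_Iic (integrable_gaussianPDFReal 0 1).integrableOn
    (integrable_gaussianPDFReal 0 1).integrableOn

lemma monotone_stdNormalCDF : Monotone stdNormalCDF := fun x y hxy => by
  have := intervalIntegral.integral_nonneg (μ := volume) hxy
    fun t _ => gaussianPDFReal_nonneg 0 1 t
  linarith [stdNormalCDF_sub_stdNormalCDF x y]

lemma stdNormalCDF_neg (x : ℝ) : stdNormalCDF (-x) = 1 - stdNormalCDF x := by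
  have hsymm : stdNormalCDF (-x) = ∫ t in Ioi x, gaussianPDFReal 0 1 t := by
    rw [stdNormalCDF_eq_setIntegral, ← neg_neg x, ← integral_comp_neg_Ioi]
    simp [gaussianPDFReal]
  have htotal := intervalIntegral.integral_Iic_add_Ioi (b := x)
    (integrable_gaussianPDFReal 0 1).integrableOn (integrable_gaussianPDFReal 0 1).integrableOn
  rw [integral_gaussianPDFReal_eq_one 0 one_ne_zero] at htotal
  rw [hsymm, stdNormalCDF_eq_setIntegral]
  linarith

lemma gaussianPDFReal_sub_exp_mul_gaussianPDFReal_sub {c : ℝ} (hc : c ≠ 0) (ε t : ℝ) :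
    gaussianPDFReal 0 1 t - exp ε * gaussianPDFReal 0 1 (t - c)
      = (1 - exp (c * (t - (c / 2 - ε / c)))) * gaussianPDFReal 0 1 t := by
  have hexp :
      exp ε * exp (-(t - c) ^ 2 / 2) = exp (c * (t - (c / 2 - ε / c))) * exp (-t ^ 2 / 2) := by
    rw [← exp_add, ← exp_add]
    congr 1
    field_simp
    ring
  simp only [gaussianPDFReal, NNReal.coe_one, sub_zero, mul_one]
  linear_combination -(√(2 * π))⁻¹ * hexp

lemma intervalIntegral_nonneg_of_sign_change {f : ℝ → ℝ} {x₀ : ℝ}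
    (hleft : ∀ t ≤ x₀, 0 ≤ f t) (hright : ∀ t, x₀ ≤ t → f t ≤ 0) (x : ℝ) :
    0 ≤ ∫ t in x..x₀, f t := by
  rcases le_total x x₀ with hx | hx
  · exact intervalIntegral.integral_nonneg hx fun t ht => hleft t ht.2
  · rw [intervalIntegral.integral_symm, ← intervalIntegral.integral_neg]
    exact intervalIntegral.integral_nonneg hx fun t ht => neg_nonneg.2 (hright t ht.1)

lemma stdNormalCDF_sub_exp_mul_stdNormalCDF_sub_le {c : ℝ} (hc : 0 < c) (ε x : ℝ) :
    stdNormalCDF x - exp ε * stdNormalCDF (x - c)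
      ≤ stdNormalCDF (c / 2 - ε / c) - exp ε * stdNormalCDF (c / 2 - ε / c - c) := by
  set x₀ := c / 2 - ε / c
  have hdiff : (stdNormalCDF x₀ - exp ε * stdNormalCDF (x₀ - c))
      - (stdNormalCDF x - exp ε * stdNormalCDF (x - c))
      = ∫ t in x..x₀, (gaussianPDFReal 0 1 t - exp ε * gaussianPDFReal 0 1 (t - c)) := by
    have hφ := integrable_gaussianPDFReal 0 1
    rw [intervalIntegral.integral_sub hφ.intervalIntegrable
        ((hφ.comp_sub_right c).const_mul (exp ε)).intervalIntegrable,
      intervalIntegral.integral_const_mul, intervalIntegral.integral_comp_sub_right,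
      ← stdNormalCDF_sub_stdNormalCDF, ← stdNormalCDF_sub_stdNormalCDF]
    ring
  have hsign := intervalIntegral_nonneg_of_sign_change (x₀ := x₀)
    (f := fun t => gaussianPDFReal 0 1 t - exp ε * gaussianPDFReal 0 1 (t - c))
    (fun t ht => by
      rw [gaussianPDFReal_sub_exp_mul_gaussianPDFReal_sub hc.ne']
      exact mul_nonneg (sub_nonneg.2 (exp_le_one_iff.2
        (mul_nonpos_of_nonneg_of_nonpos hc.le (sub_nonpos.2 ht)))) (gaussianPDFReal_nonneg 0 1 t))
    (fun t ht => by
      rw [gaussianPDFReal_sub_exp_mul_gaussianPDFReal_sub hc.ne']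
      exact mul_nonpos_of_nonpos_of_nonneg (sub_nonpos.2 (one_le_exp_iff.2
        (mul_nonneg hc.le (sub_nonneg.2 ht)))) (gaussianPDFReal_nonneg 0 1 t)) x
  linarith

theorem dpsign_minus_one_dp_general
    (Δ σ ε δ : ℝ) (hΔ : 0 < Δ) (hσ : 0 < σ)
    (hAG : stdNormalCDF (Δ / (2 * σ) - ε * σ / Δ)
        - Real.exp ε * stdNormalCDF (-(Δ / (2 * σ)) - ε * σ / Δ) ≤ δ) :
    ∀ a b : ℝ, |a - b| ≤ Δ →
      1 - stdNormalCDF (a / σ) ≤ Real.exp ε * (1 - stdNormalCDF (b / σ)) + δ := by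
  intro a b hab
  have hpeak : Δ / σ / 2 - ε / (Δ / σ) = Δ / (2 * σ) - ε * σ / Δ := by field_simp
  have hpeak_shift : Δ / σ / 2 - ε / (Δ / σ) - Δ / σ = -(Δ / (2 * σ)) - ε * σ / Δ := by
    field_simp
    ring
  have hshift : -(a / σ) - Δ / σ ≤ -(b / σ) := by
    have hba : b ≤ a + Δ := by linarith [neg_abs_le (a - b)]
    have := div_le_div_of_nonneg_right hba hσ.le
    rw [add_div] at this
    linarith
  have hmax := stdNormalCDF_sub_exp_mul_stdNormalCDF_sub_le (div_pos hΔ hσ) ε (-(a / σ))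
  rw [hpeak_shift, hpeak] at hmax
  calc 1 - stdNormalCDF (a / σ) = stdNormalCDF (-(a / σ)) := (stdNormalCDF_neg _).symm
    _ ≤ exp ε * stdNormalCDF (-(a / σ) - Δ / σ) + δ := by linarith
    _ ≤ exp ε * stdNormalCDF (-(b / σ)) + δ := by gcongr; exact monotone_stdNormalCDF hshift
    _ = exp ε * (1 - stdNormalCDF (b / σ)) + δ := by rw [stdNormalCDF_neg]

/-- Under the analytic-Gaussian condition, the probability that the dpsign compressor
outputs `−1` satisfies the `(ε, δ)`-DP inequality. -/
theorem dpsign_minus_one_dp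
    (Δ σ ε δ : ℝ) (hΔ : 0 < Δ) (hσ : 0 < σ) (hε : 0 ≤ ε) (hδ : δ ∈ Set.Ioo (0 : ℝ) 1)
    (hAG : stdNormalCDF (Δ / (2 * σ) - ε * σ / Δ)
        - Real.exp ε * stdNormalCDF (-(Δ / (2 * σ)) - ε * σ / Δ) ≤ δ) :
    ∀ a b : ℝ, |a - b| ≤ Δ →
      1 - stdNormalCDF (a / σ) ≤ Real.exp ε * (1 - stdNormalCDF (b / σ)) + δ :=
  dpsign_minus_one_dp_general Δ σ ε δ hΔ hσ hAG
end
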